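/- arXiv:1104.0607 — 2 statements merged into one kernel-verified Lean document; each statement's English description precedes it below -/
import Mathlib

section
/- □-free formulas: ⊘ and ∨ coincide on subsingleton teams (Theorem 8b, case □ ∉ M): let φ be an MDL formula containing no occurrence of the modality □, and let φ' be obtained from φ by replacing every occurrence of the classical disjunction ⊘ by the dependence disjunction ∨. Then for every frame W and every team T containing at most one world, W,T ⊨ φ if and only if W,T ⊨ φ'. -/
/-- Formulas of modal dependence logic over atomic propositions `AP`.
Negation occurs only in front of atoms (`natom`) and dependence atoms (`ndep`).
`dep ps q` is the dependence atom dep(p₁,…,p_{n-1};p_n) with `ps` the list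
p₁,…,p_{n-1} and `q = p_n`.  `or` is dependence disjunction ∨ and
`cor` is classical disjunction ⊘. -/
inductive MDL (AP : Type) : Type
  | top : MDL AP
  | bot : MDL AP
  | atom : AP → MDL AP
  | natom : AP → MDL AP
  | dep : List AP → AP → MDL AP
  | ndep : List AP → AP → MDL AP
  | and : MDL AP → MDL AP → MDL AP
  | or : MDL AP → MDL AP → MDL AP
  | cor : MDL AP → MDL AP → MDL AP
  | box : MDL AP → MDL AP
  | dia : MDL AP → MDL AP

/-- A Kripke frame `W = (S, R, π)`. -/
structure Frame (AP : Type) where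
  S : Type
  R : S → S → Prop
  pi : S → Set AP

/-- Team semantics of MDL: `sat W φ T` means `W, T ⊨ φ`. -/
def sat {AP : Type} (W : Frame AP) : MDL AP → Set W.S → Prop
  | .top, _ => True
  | .bot, T => T = ∅
  | .atom p, T => ∀ s ∈ T, p ∈ W.pi s
  | .natom p, T => ∀ s ∈ T, p ∉ W.pi s
  | .dep ps q, T => ∀ s₁ ∈ T, ∀ s₂ ∈ T,
      (∀ p ∈ ps, (p ∈ W.pi s₁ ↔ p ∈ W.pi s₂)) → (q ∈ W.pi s₁ ↔ q ∈ W.pi s₂)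
  | .ndep _ _, T => T = ∅
  | .and φ ψ, T => sat W φ T ∧ sat W ψ T
  | .or φ ψ, T => ∃ T₁ T₂, T = T₁ ∪ T₂ ∧ sat W φ T₁ ∧ sat W ψ T₂
  | .cor φ ψ, T => sat W φ T ∨ sat W ψ T
  | .box φ, T => sat W φ {s' | ∃ s ∈ T, W.R s s'}
  | .dia φ, T => ∃ T' : Set W.S, sat W φ T' ∧ ∀ s ∈ T, ∃ s' ∈ T', W.R s s'

/-- A formula is satisfiable iff some frame and nonempty team satisfy it. -/
def satisfiable {AP : Type} (φ : MDL AP) : Prop :=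
  ∃ (W : Frame AP) (T : Set W.S), T.Nonempty ∧ sat W φ T

/-- A formula contains no occurrence of □. -/
def boxFree {AP : Type} : MDL AP → Prop
  | .box _ => False
  | .and φ ψ => boxFree φ ∧ boxFree ψ
  | .or φ ψ => boxFree φ ∧ boxFree ψ
  | .cor φ ψ => boxFree φ ∧ boxFree ψ
  | .dia φ => boxFree φ
  | _ => True

/-- Replace every classical disjunction ⊘ by dependence disjunction ∨. -/
def corToOr {AP : Type} : MDL AP → MDL AP
  | .cor φ ψ => .or (corToOr φ) (corToOr ψ)
  | .and φ ψ => .and (corToOr φ) (corToOr ψ)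
  | .or φ ψ => .or (corToOr φ) (corToOr ψ)
  | .box φ => .box (corToOr φ)
  | .dia φ => .dia (corToOr φ)
  | φ => φ

/-
Every MDL formula is satisfied by the empty team and is closed under subteams. Hence on a team
with at most one world a split `T = T₁ ∪ T₂` puts all of `T` into one part, so `∨` behaves like
`⊘`; and a `◇`-witness can be shrunk to a single successor, so the induction hypothesis again
only meets teams with at most one world. `□` is excluded because it can map a singleton team to
a large one.
-/

section Semantics

variable {AP : Type} {W : Frame AP}

lemma sat_empty (φ : MDL AP) : sat W φ ∅ := by
  induction φ with
  | bot | ndep => rfl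
  | top | atom | natom | dep => simp [sat]
  | and φ ψ ihφ ihψ => exact ⟨ihφ, ihψ⟩
  | or φ ψ ihφ ihψ => exact ⟨∅, ∅, (Set.union_empty ∅).symm, ihφ, ihψ⟩
  | cor φ ψ ihφ _ => exact Or.inl ihφ
  | box φ ih => simpa [sat] using ih
  | dia φ ih => exact ⟨∅, ih, fun _ hs => hs.elim⟩

lemma sat_mono (φ : MDL AP) {T T' : Set W.S} (hsub : T' ⊆ T) : sat W φ T → sat W φ T' := by
  induction φ generalizing T T' with
  | top => exact id
  | bot | ndep => exact fun h => Set.subset_eq_empty hsub h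
  | atom | natom => exact fun h s hs => h s (hsub hs)
  | dep => exact fun h s₁ h₁ s₂ h₂ => h s₁ (hsub h₁) s₂ (hsub h₂)
  | and φ ψ ihφ ihψ => exact fun h => ⟨ihφ hsub h.1, ihψ hsub h.2⟩
  | or φ ψ ihφ ihψ =>
      rintro ⟨T₁, T₂, rfl, h₁, h₂⟩
      refine ⟨T' ∩ T₁, T' ∩ T₂, ?_, ihφ Set.inter_subset_right h₁, ihψ Set.inter_subset_right h₂⟩
      rw [← Set.inter_union_distrib_left, Set.inter_eq_left.mpr hsub]
  | cor φ ψ ihφ ihψ => exact Or.imp (ihφ hsub) (ihψ hsub)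
  | box φ ih => exact ih fun _ ⟨s, hs, hR⟩ => ⟨s, hsub hs, hR⟩
  | dia φ ih => exact fun ⟨T'', h, hcov⟩ => ⟨T'', h, fun s hs => hcov s (hsub hs)⟩

lemma sat_or_iff_of_subsingleton {φ ψ : MDL AP} {T : Set W.S} (hT : T.Subsingleton) :
    sat W (.or φ ψ) T ↔ sat W φ T ∨ sat W ψ T := by
  constructor
  · rintro ⟨T₁, T₂, hU, h₁, h₂⟩
    by_cases hT₁ : T ⊆ T₁
    · exact Or.inl (sat_mono φ hT₁ h₁)
    · obtain ⟨a, ha, ha₁⟩ := Set.not_subset.mp hT₁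
      have hT₂ : T ⊆ T₂ := fun b hb => by
        rw [hT hb ha]
        exact (hU ▸ ha : a ∈ T₁ ∪ T₂).resolve_left ha₁
      exact Or.inr (sat_mono ψ hT₂ h₂)
  · rintro (h | h)
    · exact ⟨T, ∅, (Set.union_empty T).symm, h, sat_empty ψ⟩
    · exact ⟨∅, T, (Set.empty_union T).symm, sat_empty φ, h⟩

lemma sat_dia_iff_of_subsingleton {φ : MDL AP} {T : Set W.S} (hT : T.Subsingleton) :
    sat W (.dia φ) T ↔ ∀ s ∈ T, ∃ s', W.R s s' ∧ sat W φ {s'} := by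
  constructor
  · rintro ⟨T', h, hcov⟩ s hs
    obtain ⟨s', hs', hR⟩ := hcov s hs
    exact ⟨s', hR, sat_mono φ (Set.singleton_subset_iff.mpr hs') h⟩
  · intro h
    rcases T.eq_empty_or_nonempty with rfl | ⟨a, ha⟩
    · exact ⟨∅, sat_empty φ, fun _ hs => hs.elim⟩
    · obtain ⟨s', hR, hs'⟩ := h a ha
      exact ⟨{s'}, hs', fun s hs => ⟨s', rfl, hT ha hs ▸ hR⟩⟩

end Semantics

/-- for □-free formulas, ⊘ and ∨ coincide on subsingleton teams. -/
theorem boxFree_cor_eq_or {AP : Type} (φ : MDL AP) (hφ : boxFree φ)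
    (W : Frame AP) (T : Set W.S) (hT : T.Subsingleton) :
    sat W φ T ↔ sat W (corToOr φ) T := by
  induction φ generalizing T with
  | top | bot | atom | natom | dep | ndep => rfl
  | box => exact hφ.elim
  | and φ ψ ihφ ihψ => exact and_congr (ihφ hφ.1 T hT) (ihψ hφ.2 T hT)
  | or φ ψ ihφ ihψ =>
      rw [corToOr, sat_or_iff_of_subsingleton hT, sat_or_iff_of_subsingleton hT]
      exact or_congr (ihφ hφ.1 T hT) (ihψ hφ.2 T hT)
  | cor φ ψ ihφ ihψ =>
      rw [corToOr, sat_or_iff_of_subsingleton hT]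
      exact or_congr (ihφ hφ.1 T hT) (ihψ hφ.2 T hT)
  | dia φ ih =>
      rw [corToOr, sat_dia_iff_of_subsingleton hT, sat_dia_iff_of_subsingleton hT]
      exact forall₂_congr fun _ _ => exists_congr fun _ =>
        and_congr_right' (ih hφ _ Set.subsingleton_singleton)
end

section
/- Tree unraveling invariance of MDL: let W = (S,R,π) be a frame and w ∈ S. Define the unraveling W^w = (S',R',π') where S' is the set of all finite sequences (s₀,…,s_n) with s₀ = w and (s_i,s_{i+1}) ∈ R for all i < n, where ((s₀,…,s_n),(s₀',…,s_m')) ∈ R' iff m = n+1 and s_i' = s_i for all i ≤ n, and where π'((s₀,…,s_n)) = π(s_n). Then for every MDL formula φ: W,{w} ⊨ φ if and only if W^w,{(w)} ⊨ φ. -/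
/-- The tree unraveling of `W` at `w`: worlds are the finite R-paths
(s₀,…,sₙ) with s₀ = w (represented as lists), a path steps to its
one-step extensions, and a path is labeled by the label of its last world. -/
def Unravel {AP : Type} (W : Frame AP) (w : W.S) : Frame AP where
  S := {l : List W.S // l.head? = some w ∧ List.Chain' W.R l}
  R := fun l₁ l₂ => ∃ x : W.S, l₂.val = l₁.val ++ [x]
  pi := fun l =>
    match l.val.getLast? with
    | some s => W.pi s
    | none => ∅

/-- The root (w) of the unraveling. -/
def unravelRoot {AP : Type} (W : Frame AP) (w : W.S) : (Unravel W w).S :=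
  ⟨[w], by simp [List.Chain', List.isChain_singleton]⟩


/-!
The map sending a path of the unraveling to its last world is a bounded morphism (p-morphism)
onto `W`, and MDL is invariant under bounded morphisms in the strong team sense:
`W', T ⊨ φ ↔ W, f '' T ⊨ φ`. In the cases `∨` and `◇` a team of `W` has to be pulled back
to `W'`: take its preimage under `f` (within `T` for `∨`); its image is only a subteam of
the original, which suffices by downward closure of MDL.
-/

theorem sat_of_subset {AP : Type} (W : Frame AP) (φ : MDL AP) :
    ∀ {T T' : Set W.S}, T' ⊆ T → sat W φ T → sat W φ T' := by
  induction φ with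
  | top => exact fun _ _ => trivial
  | bot | ndep => exact fun h hT => Set.subset_empty_iff.mp (hT ▸ h)
  | atom | natom => exact fun h hT s hs => hT s (h hs)
  | dep => exact fun h hT s₁ h₁ s₂ h₂ => hT s₁ (h h₁) s₂ (h h₂)
  | and φ ψ ihφ ihψ => exact fun h hT => ⟨ihφ h hT.1, ihψ h hT.2⟩
  | or φ ψ ihφ ihψ =>
    rintro T T' h ⟨T₁, T₂, rfl, h₁, h₂⟩
    refine ⟨T' ∩ T₁, T' ∩ T₂, ?_, ihφ Set.inter_subset_right h₁,
      ihψ Set.inter_subset_right h₂⟩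
    rw [← Set.inter_union_distrib_left, Set.inter_eq_left.mpr h]
  | cor φ ψ ihφ ihψ => exact fun h hT => hT.imp (ihφ h) (ihψ h)
  | box φ ih =>
    intro T T' h hT
    refine ih ?_ hT
    rintro _ ⟨s, hs, hR⟩
    exact ⟨s, h hs, hR⟩
  | dia φ ih =>
    rintro T T' h ⟨U, hU, hsucc⟩
    exact ⟨U, hU, fun s hs => hsucc s (h hs)⟩

namespace Frame

variable {AP : Type}

structure IsBoundedMorphism {W' W : Frame AP} (f : W'.S → W.S) : Prop where
  pi_eq : ∀ u, W'.pi u = W.pi (f u)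
  map_rel : ∀ {u v}, W'.R u v → W.R (f u) (f v)
  exists_rel_of_rel : ∀ {u y}, W.R (f u) y → ∃ v, W'.R u v ∧ f v = y

namespace IsBoundedMorphism

variable {W' W : Frame AP} {f : W'.S → W.S}

theorem image_successors (hf : IsBoundedMorphism f) (T : Set W'.S) :
    f '' {v | ∃ u ∈ T, W'.R u v} = {y | ∃ x ∈ f '' T, W.R x y} := by
  ext y
  constructor
  · rintro ⟨v, ⟨u, hu, huv⟩, rfl⟩
    exact ⟨f u, ⟨u, hu, rfl⟩, hf.map_rel huv⟩
  · rintro ⟨_, ⟨u, hu, rfl⟩, hR⟩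
    obtain ⟨v, huv, rfl⟩ := hf.exists_rel_of_rel hR
    exact ⟨v, ⟨u, hu, huv⟩, rfl⟩

theorem sat_iff_sat_image (hf : IsBoundedMorphism f) (φ : MDL AP) :
    ∀ T : Set W'.S, sat W' φ T ↔ sat W φ (f '' T) := by
  induction φ with
  | top | bot | ndep => simp [sat]
  | atom | natom | dep => simp [sat, hf.pi_eq]
  | and φ ψ ihφ ihψ => exact fun T => and_congr (ihφ T) (ihψ T)
  | cor φ ψ ihφ ihψ => exact fun T => or_congr (ihφ T) (ihψ T)
  | box φ ih =>
    intro T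
    show sat W' φ _ ↔ sat W φ _
    rw [ih, hf.image_successors]
  | or φ ψ ihφ ihψ =>
    intro T
    constructor
    · rintro ⟨T₁, T₂, rfl, h₁, h₂⟩
      exact ⟨_, _, Set.image_union f T₁ T₂, (ihφ T₁).mp h₁, (ihψ T₂).mp h₂⟩
    · rintro ⟨U₁, U₂, hU, h₁, h₂⟩
      refine ⟨T ∩ f ⁻¹' U₁, T ∩ f ⁻¹' U₂, ?_,
        (ihφ _).mpr (sat_of_subset W φ (Set.image_subset_iff.mpr Set.inter_subset_right) h₁),
        (ihψ _).mpr (sat_of_subset W ψ (Set.image_subset_iff.mpr Set.inter_subset_right) h₂)⟩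
      rw [← Set.inter_union_distrib_left, ← Set.preimage_union, ← hU]
      exact (Set.inter_eq_left.mpr (Set.subset_preimage_image f T)).symm
  | dia φ ih =>
    intro T
    constructor
    · rintro ⟨U, hU, hsucc⟩
      refine ⟨f '' U, (ih U).mp hU, ?_⟩
      rintro _ ⟨u, hu, rfl⟩
      obtain ⟨v, hv, huv⟩ := hsucc u hu
      exact ⟨f v, ⟨v, hv, rfl⟩, hf.map_rel huv⟩
    · rintro ⟨U, hU, hsucc⟩
      refine ⟨f ⁻¹' U, (ih _).mpr (sat_of_subset W φ (Set.image_preimage_subset f U) hU), ?_⟩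
      intro u hu
      obtain ⟨y, hy, hR⟩ := hsucc (f u) ⟨u, hu, rfl⟩
      obtain ⟨v, huv, rfl⟩ := hf.exists_rel_of_rel hR
      exact ⟨v, hy, huv⟩

end IsBoundedMorphism

end Frame

namespace Unravel

variable {AP : Type} (W : Frame AP) (w : W.S)

theorem val_ne_nil (l : (Unravel W w).S) : l.val ≠ [] := by
  intro h
  simpa [h] using l.prop.1

def last (l : (Unravel W w).S) : W.S := l.val.getLast (val_ne_nil W w l)

theorem pi_eq_pi_last (l : (Unravel W w).S) : (Unravel W w).pi l = W.pi (last W w l) := by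
  simp only [Unravel, last, List.getLast?_eq_some_getLast (val_ne_nil W w l)]

def snoc (l : (Unravel W w).S) (x : W.S) (h : W.R (last W w l) x) : (Unravel W w).S :=
  ⟨l.val ++ [x], by
    refine ⟨by rw [List.head?_append_of_ne_nil _ (val_ne_nil W w l)]; exact l.prop.1, ?_⟩
    refine l.prop.2.append (List.isChain_singleton x) ?_
    simp only [List.getLast?_eq_some_getLast (val_ne_nil W w l), List.head?_cons,
      Option.mem_def, Option.some.injEq, forall_eq']
    exact h⟩

theorem isBoundedMorphism_last : Frame.IsBoundedMorphism (last W w) where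
  pi_eq := pi_eq_pi_last W w
  map_rel := by
    rintro l l' ⟨x, hx⟩
    have hchain : (l.val ++ [x]).IsChain W.R := hx ▸ l'.prop.2
    simpa [last, hx] using hchain.rel_getLast_head_of_append (val_ne_nil W w l) (by simp)
  exists_rel_of_rel := fun {l x} h => ⟨snoc W w l x h, ⟨x, rfl⟩, by simp [last, snoc]⟩

theorem last_unravelRoot : last W w (unravelRoot W w) = w := rfl

end Unravel

/-- tree unraveling invariance of MDL. -/
theorem unravel_invariance {AP : Type} (W : Frame AP) (w : W.S) (φ : MDL AP) :
    sat W φ ({w} : Set W.S) ↔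
      sat (Unravel W w) φ ({unravelRoot W w} : Set (Unravel W w).S) := by
  rw [(Unravel.isBoundedMorphism_last W w).sat_iff_sat_image φ, Set.image_singleton,
    Unravel.last_unravelRoot]
end
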